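/- arXiv:2510.05527 — 8 statements merged into one kernel-verified Lean document; each statement's English description precedes it below -/
import Mathlib

section
/- Let f, g : ℝ^d → ℝ with g convex. Suppose x* minimizes f and f satisfies the local strong convexity inequality f(x) ≥ f(x*) + (μ/2)‖x - x*‖² for all x with ‖x - x*‖ = τ. If sup_x |f(x) - g(x)| ≤ δ and δ < μτ²/4, then every minimizer y* of g satisfies ‖y* - x*‖ ≤ τ. -/
/-! If a minimizer `y` of `g` lay outside the ball, the point `z` of the segment `[x*, y]` on the
sphere of radius `τ` would satisfy `g z ≤ max (g x*) (g y) = g x*` by convexity, hence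
`f z ≤ f x* + 2δ`; strong convexity on the sphere gives `f z ≥ f x* + μτ²/2`, contradicting
`δ < μτ²/4`. -/

theorem exists_mem_segment_norm_sub_eq {E : Type*} [NormedAddCommGroup E] [NormedSpace ℝ E]
    {x y : E} {r : ℝ} (hr₀ : 0 ≤ r) (hr : r ≤ ‖y - x‖) :
    ∃ z ∈ segment ℝ x y, ‖z - x‖ = r := by
  have hivt := (convex_segment x y).isPreconnected.intermediate_value
    (left_mem_segment ℝ x y) (right_mem_segment ℝ x y)
    (f := fun z => ‖z - x‖) (by fun_prop)
  simpa using hivt ⟨by simpa using hr₀, hr⟩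

theorem sub_le_two_mul_of_abs_sub_le {α : Type*} {f g : α → ℝ} {δ : ℝ}
    (hclose : ∀ x, |f x - g x| ≤ δ) {x z : α} (hg : g z ≤ g x) : f z - f x ≤ 2 * δ := by
  have hz := (abs_le.1 (hclose z)).2
  have hx := (abs_le.1 (hclose x)).1
  linarith

theorem perturbed_minimizer_in_ball_general
    {d : ℕ} (f g : EuclideanSpace ℝ (Fin d) → ℝ)
    (xstar ystar : EuclideanSpace ℝ (Fin d)) (δ μ τ : ℝ)
    (hτ : 0 < τ)
    (hgconv : ConvexOn ℝ Set.univ g)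
    (hsc : ∀ x, ‖x - xstar‖ = τ → f xstar + (μ / 2) * ‖x - xstar‖ ^ 2 ≤ f x)
    (hclose : ∀ x, |f x - g x| ≤ δ)
    (hδsmall : δ < μ * τ ^ 2 / 4)
    (hymin : ∀ x, g ystar ≤ g x) :
    ‖ystar - xstar‖ ≤ τ := by
  by_contra! hfar
  obtain ⟨z, hz_seg, hz_norm⟩ := exists_mem_segment_norm_sub_eq hτ.le hfar.le
  have hgz : g z ≤ g xstar :=
    (hgconv.le_on_segment (Set.mem_univ _) (Set.mem_univ _) hz_seg).trans
      (max_le le_rfl (hymin xstar))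
  have hrise := hsc z hz_norm
  have hfall := sub_le_two_mul_of_abs_sub_le hclose hgz
  rw [hz_norm] at hrise
  linarith

/-- if `g` is convex, uniformly `δ`-close to `f`, `f` is locally
strongly convex on the sphere of radius `τ` around its minimizer `xstar`, and
`δ < μ τ² / 4`, then every minimizer of `g` lies in the closed ball of radius
`τ` around `xstar`. -/
theorem perturbed_minimizer_in_ball
    {d : ℕ} (f g : EuclideanSpace ℝ (Fin d) → ℝ)
    (xstar ystar : EuclideanSpace ℝ (Fin d)) (δ μ τ : ℝ)
    (hδ : 0 < δ) (hμ : 0 < μ) (hτ : 0 < τ)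
    (hgconv : ConvexOn ℝ Set.univ g)
    (hxmin : ∀ x, f xstar ≤ f x)
    (hsc : ∀ x, ‖x - xstar‖ = τ → f xstar + (μ / 2) * ‖x - xstar‖ ^ 2 ≤ f x)
    (hclose : ∀ x, |f x - g x| ≤ δ)
    (hδsmall : δ < μ * τ ^ 2 / 4)
    (hymin : ∀ x, g ystar ≤ g x) :
    ‖ystar - xstar‖ ≤ τ :=
  perturbed_minimizer_in_ball_general f g xstar ystar δ μ τ hτ hgconv hsc hclose hδsmall hymin
end

section
/- Let f and g be two functions on a convex set C ⊆ ℝ^d, with f being α-strongly convex and g being β-strongly convex on C, minimized at x* and y* respectively. If sup_{x ∈ C} |f(x) - g(x)| ≤ δ, then ‖x* - y*‖² ≤ 4δ/(α + β). -/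
open RealInnerProductSpace

/-- stability of minimizers of two strongly convex functions on a
convex set that are uniformly `δ`-close. Strong convexity is expressed via the
gradients `vf`, `vg` at the respective minimizers, together with the
first-order optimality conditions. -/
theorem strongly_convex_minimizer_stability
    {d : ℕ} (C : Set (EuclideanSpace ℝ (Fin d)))
    (hC : Convex ℝ C)
    (f g : EuclideanSpace ℝ (Fin d) → ℝ)
    (xstar ystar : EuclideanSpace ℝ (Fin d))
    (hx : xstar ∈ C) (hy : ystar ∈ C)
    (α β δ : ℝ) (hα : 0 < α) (hβ : 0 < β)
    (vf vg : EuclideanSpace ℝ (Fin d))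
    (hxmin : ∀ x ∈ C, f xstar ≤ f x)
    (hymin : ∀ x ∈ C, g ystar ≤ g x)
    (hfsc : ∀ x ∈ C, f xstar + ⟪vf, x - xstar⟫ + (α / 2) * ‖x - xstar‖ ^ 2 ≤ f x)
    (hgsc : ∀ x ∈ C, g ystar + ⟪vg, x - ystar⟫ + (β / 2) * ‖x - ystar‖ ^ 2 ≤ g x)
    (hfopt : ∀ x ∈ C, 0 ≤ ⟪vf, x - xstar⟫)
    (hgopt : ∀ x ∈ C, 0 ≤ ⟪vg, x - ystar⟫)
    (hclose : ∀ x ∈ C, |f x - g x| ≤ δ) :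
    ‖xstar - ystar‖ ^ 2 ≤ 4 * δ / (α + β) := by
  have h1 := hfsc ystar hy
  have h2 := hgsc xstar hx
  have h3 := hfopt ystar hy
  have h4 := hgopt xstar hx
  have h5 := abs_le.mp (hclose ystar hy)
  have h6 := abs_le.mp (hclose xstar hx)
  have hrev : ‖ystar - xstar‖ = ‖xstar - ystar‖ := norm_sub_rev _ _
  rw [hrev] at h1
  rw [le_div_iff₀ (by linarith : (0:ℝ) < α + β)]
  nlinarith [h1, h2, h3, h4, h5.1, h5.2, h6.1, h6.2]
end

section
/- Let P_s, P_t be real matrices of sizes n_s × n_s and n_t × n_t with entries in [0,1], and let P̂_s, P̂_t be matrices of the same sizes with entries in [0,1]. Let π be an n_s × n_t matrix with nonnegative entries summing to 1. Then |tr(πᵀ P_s π P_tᵀ) − tr(πᵀ P̂_s π P̂_tᵀ)| ≤ ‖P_s − P̂_s‖_{∞,∞} + ‖P_t − P̂_t‖_{∞,∞}, where ‖M‖_{∞,∞} = max_{i,j} |M_{ij}|. -/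
open Matrix BigOperators

/-- perturbation bound on the GW coupling trace term. Here the
entrywise max norm is written as an indexed supremum over the (finite) index
types. -/
theorem trace_coupling_perturbation_bound
    {ns nt : ℕ}
    (Ps Phs : Matrix (Fin ns) (Fin ns) ℝ)
    (Pt Pht : Matrix (Fin nt) (Fin nt) ℝ)
    (π : Matrix (Fin ns) (Fin nt) ℝ)
    (hPs : ∀ i j, Ps i j ∈ Set.Icc (0:ℝ) 1)
    (hPhs : ∀ i j, Phs i j ∈ Set.Icc (0:ℝ) 1)
    (hPt : ∀ i j, Pt i j ∈ Set.Icc (0:ℝ) 1)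
    (hPht : ∀ i j, Pht i j ∈ Set.Icc (0:ℝ) 1)
    (hπ : ∀ i j, 0 ≤ π i j)
    (hmass : ∑ i, ∑ j, π i j = 1) :
    |Matrix.trace (πᵀ * Ps * π * Ptᵀ) - Matrix.trace (πᵀ * Phs * π * Phtᵀ)| ≤
      (⨆ i, ⨆ j, |Ps i j - Phs i j|) + (⨆ i, ⨆ j, |Pt i j - Pht i j|) := by
  have hns : 0 < ns := by
    by_contra h; push_neg at h; interval_cases ns; simp at hmass
  have hnt : 0 < nt := by
    by_contra h; push_neg at h; interval_cases nt; simp at hmass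
  haveI : Nonempty (Fin ns) := ⟨⟨0, hns⟩⟩
  haveI : Nonempty (Fin nt) := ⟨⟨0, hnt⟩⟩
  set Ds := (⨆ i, ⨆ j, |Ps i j - Phs i j|) with hDsdef
  set Dt := (⨆ i, ⨆ j, |Pt i j - Pht i j|) with hDtdef
  have hDs : ∀ i j, |Ps i j - Phs i j| ≤ Ds := by
    intro i j
    calc |Ps i j - Phs i j| ≤ ⨆ j, |Ps i j - Phs i j| :=
          le_ciSup (f := fun j => |Ps i j - Phs i j|)
            (Set.Finite.bddAbove (Set.finite_range _)) j
      _ ≤ Ds :=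
          le_ciSup (f := fun i => ⨆ j, |Ps i j - Phs i j|)
            (Set.Finite.bddAbove (Set.finite_range _)) i
  have hDt : ∀ i j, |Pt i j - Pht i j| ≤ Dt := by
    intro i j
    calc |Pt i j - Pht i j| ≤ ⨆ j, |Pt i j - Pht i j| :=
          le_ciSup (f := fun j => |Pt i j - Pht i j|)
            (Set.Finite.bddAbove (Set.finite_range _)) j
      _ ≤ Dt :=
          le_ciSup (f := fun i => ⨆ j, |Pt i j - Pht i j|)
            (Set.Finite.bddAbove (Set.finite_range _)) i
  have expand : ∀ (A : Matrix (Fin ns) (Fin ns) ℝ) (B : Matrix (Fin nt) (Fin nt) ℝ),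
      Matrix.trace (πᵀ * A * π * Bᵀ) =
        ∑ j, ∑ i', ∑ j', ∑ i, π i j * π i' j' * (A i i' * B j j') := by
    intro A B
    simp only [Matrix.trace, Matrix.diag, Matrix.mul_apply, Matrix.transpose_apply,
      Finset.sum_mul, Finset.mul_sum]
    refine Finset.sum_congr rfl fun j _ => ?_
    rw [Finset.sum_comm]
    refine Finset.sum_congr rfl fun i' _ => ?_
    refine Finset.sum_congr rfl fun j' _ => ?_
    refine Finset.sum_congr rfl fun i _ => ?_
    ring
  rw [expand, expand]
  simp only [← Finset.sum_sub_distrib]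
  have key : ∀ (i i' : Fin ns) (j j' : Fin nt),
      |π i j * π i' j' * (Ps i i' * Pt j j') - π i j * π i' j' * (Phs i i' * Pht j j')| ≤
        π i j * π i' j' * (Ds + Dt) := by
    intro i i' j j'
    rw [← mul_sub, abs_mul, abs_of_nonneg (mul_nonneg (hπ i j) (hπ i' j'))]
    apply mul_le_mul_of_nonneg_left _ (mul_nonneg (hπ i j) (hπ i' j'))
    have h1 : Ps i i' * Pt j j' - Phs i i' * Pht j j'
        = (Ps i i' - Phs i i') * Pt j j' + Phs i i' * (Pt j j' - Pht j j') := by ring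
    rw [h1]
    have e1 : |Pt j j'| ≤ 1 := by
      rw [abs_of_nonneg (hPt j j').1]; exact (hPt j j').2
    have e2 : |Phs i i'| ≤ 1 := by
      rw [abs_of_nonneg (hPhs i i').1]; exact (hPhs i i').2
    calc |(Ps i i' - Phs i i') * Pt j j' + Phs i i' * (Pt j j' - Pht j j')|
        ≤ |(Ps i i' - Phs i i') * Pt j j'| + |Phs i i' * (Pt j j' - Pht j j')| := abs_add_le _ _
      _ = |Ps i i' - Phs i i'| * |Pt j j'| + |Phs i i'| * |Pt j j' - Pht j j'| := by
          rw [abs_mul, abs_mul]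
      _ ≤ |Ps i i' - Phs i i'| * 1 + 1 * |Pt j j' - Pht j j'| := by
          have := mul_le_mul_of_nonneg_left e1 (abs_nonneg (Ps i i' - Phs i i'))
          have := mul_le_mul_of_nonneg_right e2 (abs_nonneg (Pt j j' - Pht j j'))
          linarith
      _ = |Ps i i' - Phs i i'| + |Pt j j' - Pht j j'| := by ring
      _ ≤ Ds + Dt := add_le_add (hDs i i') (hDt j j')
  calc |∑ j, ∑ i', ∑ j', ∑ i,
        (π i j * π i' j' * (Ps i i' * Pt j j') - π i j * π i' j' * (Phs i i' * Pht j j'))|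
      ≤ ∑ j, ∑ i', ∑ j', ∑ i, π i j * π i' j' * (Ds + Dt) := by
        refine (Finset.abs_sum_le_sum_abs _ _).trans (Finset.sum_le_sum fun j _ => ?_)
        refine (Finset.abs_sum_le_sum_abs _ _).trans (Finset.sum_le_sum fun i' _ => ?_)
        refine (Finset.abs_sum_le_sum_abs _ _).trans (Finset.sum_le_sum fun j' _ => ?_)
        refine (Finset.abs_sum_le_sum_abs _ _).trans (Finset.sum_le_sum fun i _ => ?_)
        exact key i i' j j'
    _ = Ds + Dt := by
        have h2 : ∑ j, ∑ i' : Fin ns, ∑ j', ∑ i : Fin ns, π i j * π i' j' * (Ds + Dt)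
            = (∑ j, ∑ i, π i j) * ((∑ i', ∑ j', π i' j') * (Ds + Dt)) := by
          simp only [mul_assoc, ← Finset.sum_mul, ← Finset.mul_sum]
        have hswap : (∑ j : Fin nt, ∑ i : Fin ns, π i j) = 1 := by
          rw [Finset.sum_comm]; exact hmass
        rw [h2, hswap, hmass]; ring
end

section
/- Define the entropic Gromov–Wasserstein objective F(π) = −2·tr(πᵀ C π Dᵀ) + ε·Σ_{ij} π_{ij} log π_{ij} over positive matrices π of size m × n. If 4‖C‖_op‖D‖_op ≤ ε/2 and all entries of π satisfy 0 < π_{ij} ≤ 1, then the Hessian of F at π satisfies ⟨Δ, ∇²F(π)(Δ)⟩ ≥ (ε/2)‖Δ‖_F² for every m × n direction matrix Δ; that is, F is (ε/2)-strongly convex at π. -/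
open Matrix BigOperators

/-- Operator (spectral) norm of a square real matrix. -/
noncomputable def opNorm {m : ℕ} (A : Matrix (Fin m) (Fin m) ℝ) : ℝ :=
  ‖(Matrix.toEuclideanCLM (𝕜 := ℝ) A : EuclideanSpace ℝ (Fin m) →L[ℝ] EuclideanSpace ℝ (Fin m))‖

/-!
Each coupling term `⟨Δ, AΔBᵀ⟩` is bounded by Cauchy–Schwarz and two applications of the
operator-norm bound `‖AM‖_F ≤ ‖A‖_op ‖M‖_F`, one on each side, so together they cost at most
`4‖C‖_op‖D‖_op ‖Δ‖_F² ≤ (ε/2)‖Δ‖_F²`; the entropic term contributes at least `ε‖Δ‖_F²`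
because `π_{ij} ≤ 1`.
-/

lemma opNorm_nonneg {m : ℕ} (A : Matrix (Fin m) (Fin m) ℝ) : 0 ≤ opNorm A :=
  norm_nonneg _

lemma opNorm_transpose {m : ℕ} (A : Matrix (Fin m) (Fin m) ℝ) : opNorm Aᵀ = opNorm A := by
  rw [opNorm, opNorm, ← conjTranspose_eq_transpose_of_trivial, ← star_eq_conjTranspose, map_star,
    ContinuousLinearMap.star_eq_adjoint, LinearIsometryEquiv.norm_map]

lemma sum_sq_mulVec_le {m : ℕ} (A : Matrix (Fin m) (Fin m) ℝ) (v : Fin m → ℝ) :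
    ∑ i, (A *ᵥ v) i ^ 2 ≤ opNorm A ^ 2 * ∑ i, v i ^ 2 := by
  have key := pow_le_pow_left₀ (norm_nonneg _)
    ((Matrix.toEuclideanCLM (𝕜 := ℝ) A).le_opNorm (WithLp.toLp 2 v)) 2
  simpa [mul_pow, EuclideanSpace.norm_sq_eq, Matrix.toEuclideanCLM_toLp, opNorm] using key

lemma sum_sq_mul_transpose_le {ι : Type*} [Fintype ι] {n : ℕ} (M : Matrix ι (Fin n) ℝ)
    (B : Matrix (Fin n) (Fin n) ℝ) :
    ∑ i, ∑ j, (M * Bᵀ) i j ^ 2 ≤ opNorm B ^ 2 * ∑ i, ∑ j, M i j ^ 2 := by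
  have hrow (i : ι) : (M * Bᵀ) i = B *ᵥ M i := by
    ext j; simp [mul_apply, mulVec, dotProduct, mul_comm]
  rw [Finset.mul_sum]
  exact Finset.sum_le_sum fun i _ => hrow i ▸ sum_sq_mulVec_le B (M i)

lemma sum_sq_mul_le {m : ℕ} {κ : Type*} [Fintype κ] (A : Matrix (Fin m) (Fin m) ℝ)
    (M : Matrix (Fin m) κ ℝ) :
    ∑ i, ∑ j, (A * M) i j ^ 2 ≤ opNorm A ^ 2 * ∑ i, ∑ j, M i j ^ 2 := by
  have h := sum_sq_mul_transpose_le Mᵀ A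
  rw [← transpose_mul] at h
  simpa only [transpose_apply, Finset.sum_comm (γ := κ)] using h

lemma sum_mul_mul_transpose_le {m n : ℕ} (A : Matrix (Fin m) (Fin m) ℝ)
    (B : Matrix (Fin n) (Fin n) ℝ) (Δ : Matrix (Fin m) (Fin n) ℝ) :
    ∑ i, ∑ j, Δ i j * (A * Δ * Bᵀ) i j ≤ opNorm A * opNorm B * ∑ i, ∑ j, Δ i j ^ 2 := by
  set E := A * Δ * Bᵀ
  have hE : ∑ i, ∑ j, E i j ^ 2 ≤ (opNorm A * opNorm B) ^ 2 * ∑ i, ∑ j, Δ i j ^ 2 :=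
    calc ∑ i, ∑ j, E i j ^ 2 ≤ opNorm B ^ 2 * ∑ i, ∑ j, (A * Δ) i j ^ 2 :=
          sum_sq_mul_transpose_le _ B
      _ ≤ opNorm B ^ 2 * (opNorm A ^ 2 * ∑ i, ∑ j, Δ i j ^ 2) := by
          gcongr; exact sum_sq_mul_le A Δ
      _ = (opNorm A * opNorm B) ^ 2 * ∑ i, ∑ j, Δ i j ^ 2 := by ring
  have hCS : (∑ i, ∑ j, Δ i j * E i j) ^ 2 ≤
      (∑ i, ∑ j, Δ i j ^ 2) * ∑ i, ∑ j, E i j ^ 2 := by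
    simpa only [Fintype.sum_prod_type] using
      Finset.sum_mul_sq_le_sq_mul_sq Finset.univ (fun p : Fin m × Fin n => Δ p.1 p.2)
        (fun p => E p.1 p.2)
  have hK : 0 ≤ opNorm A * opNorm B := mul_nonneg (opNorm_nonneg A) (opNorm_nonneg B)
  refine abs_le_of_sq_le_sq' ?_ (by positivity) |>.2
  calc (∑ i, ∑ j, Δ i j * E i j) ^ 2 ≤ (∑ i, ∑ j, Δ i j ^ 2) * ∑ i, ∑ j, E i j ^ 2 := hCS
    _ ≤ (∑ i, ∑ j, Δ i j ^ 2) * ((opNorm A * opNorm B) ^ 2 * ∑ i, ∑ j, Δ i j ^ 2) := by gcongr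
    _ = (opNorm A * opNorm B * ∑ i, ∑ j, Δ i j ^ 2) ^ 2 := by ring

lemma sum_sq_le_sum_sq_div {ι κ : Type*} [Fintype ι] [Fintype κ] (Δ π : Matrix ι κ ℝ)
    (hπpos : ∀ i j, 0 < π i j) (hπle : ∀ i j, π i j ≤ 1) :
    ∑ i, ∑ j, Δ i j ^ 2 ≤ ∑ i, ∑ j, Δ i j ^ 2 / π i j :=
  Finset.sum_le_sum fun i _ => Finset.sum_le_sum fun j _ =>
    (le_div_iff₀ (hπpos i j)).2 <| mul_le_of_le_one_right (sq_nonneg _) (hπle i j)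

/-- the Hessian quadratic form of the entropic GW objective
`F(π) = -2 tr(πᵀ C π Dᵀ) + ε Σ π_{ij} log π_{ij}`, namely
`⟨Δ, ∇²F(π)(Δ)⟩ = -2⟨Δ, CΔDᵀ + CᵀΔD⟩ + ε Σ Δ_{ij}²/π_{ij}`,
is bounded below by `(ε/2)‖Δ‖_F²` when `4‖C‖_op‖D‖_op ≤ ε/2` and
`0 < π_{ij} ≤ 1`. -/
theorem egw_hessian_strong_convexity
    {m n : ℕ}
    (C : Matrix (Fin m) (Fin m) ℝ) (D : Matrix (Fin n) (Fin n) ℝ)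
    (ε : ℝ) (hε : 0 < ε)
    (hCD : 4 * (opNorm C * opNorm D) ≤ ε / 2)
    (π Δ : Matrix (Fin m) (Fin n) ℝ)
    (hπpos : ∀ i j, 0 < π i j) (hπle : ∀ i j, π i j ≤ 1) :
    (ε / 2) * ∑ i, ∑ j, (Δ i j) ^ 2 ≤
      -2 * (∑ i, ∑ j, Δ i j * ((C * Δ * Dᵀ) i j + (Cᵀ * Δ * D) i j)) +
        ε * ∑ i, ∑ j, (Δ i j) ^ 2 / π i j := by
  set T := ∑ i, ∑ j, Δ i j ^ 2
  have hCDΔ : ∑ i, ∑ j, Δ i j * (C * Δ * Dᵀ) i j ≤ opNorm C * opNorm D * T :=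
    sum_mul_mul_transpose_le C D Δ
  have hCDΔ' : ∑ i, ∑ j, Δ i j * (Cᵀ * Δ * D) i j ≤ opNorm C * opNorm D * T := by
    simpa only [transpose_transpose, opNorm_transpose] using sum_mul_mul_transpose_le Cᵀ Dᵀ Δ
  have hcoupling : 4 * (opNorm C * opNorm D) * T ≤ ε / 2 * T :=
    mul_le_mul_of_nonneg_right hCD (by positivity)
  have hentropy : ε * T ≤ ε * ∑ i, ∑ j, Δ i j ^ 2 / π i j :=
    mul_le_mul_of_nonneg_left (sum_sq_le_sum_sq_div Δ π hπpos hπle) hε.le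
  simp only [mul_add, Finset.sum_add_distrib]
  linarith
end

section
/- Let f, g : [0,1]² → [0,1] be symmetric measurable functions (graphons) and let π* be an optimal coupling achieving GW₂²(f,g) = ∬ (f(x,x') − g(y,y'))² dπ*(x,y) dπ*(x',y'), where π* is a probability measure on [0,1]² with both marginals equal to Lebesgue measure on [0,1]. Define g̃(y,y') = ∬ π*(y,x) f(x,x') π*(x',y') dx dx' (where π* is identified with its density). Then ∫₀¹∫₀¹ (g̃(y,y') − g(y,y'))² dy dy' ≤ GW₂²(f,g). -/
/-! For fixed `(y, y')` the weight `(x, x') ↦ p(x, y) p(x', y')` is a probability density, and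
`g̃(y, y') - g(y, y')` is the mean of `f(x, x') - g(y, y')` under it, so by Jensen its square is at
most the mean of `(f(x, x') - g(y, y'))²`. Integrating over `(y, y')` and regrouping the four
variables by Fubini gives `∬∬ (f(x, x') - g(y, y'))² p(x, y) p(x', y')`. -/

open MeasureTheory

namespace MeasurableEquiv

variable (α β γ δ : Type*) [MeasurableSpace α] [MeasurableSpace β] [MeasurableSpace γ]
  [MeasurableSpace δ]

def prodProdProdComm : (α × β) × γ × δ ≃ᵐ (α × γ) × β × δ where
  toEquiv := Equiv.prodProdProdComm α β γ δ
  measurable_toFun := by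
    change Measurable fun x : (α × β) × γ × δ => ((x.1.1, x.2.1), (x.1.2, x.2.2))
    fun_prop
  measurable_invFun := by
    change Measurable fun x : (α × γ) × β × δ => ((x.1.1, x.2.1), (x.1.2, x.2.2))
    fun_prop

end MeasurableEquiv

section Fubini

variable {α β γ δ E : Type*} [MeasurableSpace α] [MeasurableSpace β] [MeasurableSpace γ]
  [MeasurableSpace δ] [NormedAddCommGroup E] [NormedSpace ℝ E]

theorem measurePreserving_prodProdProdComm (μa : Measure α) (μb : Measure β) (μc : Measure γ)
    (μd : Measure δ) [SFinite μa] [SFinite μb] [SFinite μc] [SFinite μd] :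
    MeasurePreserving (MeasurableEquiv.prodProdProdComm α β γ δ)
      ((μa.prod μb).prod (μc.prod μd)) ((μa.prod μc).prod (μb.prod μd)) :=
  (measurePreserving_prodAssoc μa μc (μb.prod μd)).symm _ |>.comp <|
    (MeasurePreserving.id μa).prod (measurePreserving_prodAssoc μc μb μd) |>.comp <|
    (MeasurePreserving.id μa).prod (Measure.measurePreserving_swap.prod (.id μd)) |>.comp <|
    (MeasurePreserving.id μa).prod ((measurePreserving_prodAssoc μb μc μd).symm _) |>.comp <|
    measurePreserving_prodAssoc μa μb (μc.prod μd)

theorem integral_prod_prod {μa : Measure α} {μb : Measure β} {μc : Measure γ} {μd : Measure δ}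
    [SFinite μa] [SFinite μb] [SFinite μc] [SFinite μd] {G : (α × β) × γ × δ → E}
    (hG : Integrable G ((μa.prod μb).prod (μc.prod μd))) :
    ∫ z, G z ∂(μa.prod μb).prod (μc.prod μd) =
      ∫ a, ∫ b, ∫ c, ∫ d, G ((a, b), (c, d)) ∂μd ∂μc ∂μb ∂μa := by
  rw [integral_prod G hG, integral_prod _ hG.integral_prod_left]
  refine integral_congr_ae ?_
  filter_upwards [Measure.ae_ae_of_ae_prod hG.prod_right_ae] with a ha
  refine integral_congr_ae ?_
  filter_upwards [ha] with b hb
  exact integral_prod _ hb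

theorem integral_integral_le_integral_prod {μ : Measure α} {ν : Measure β} [SFinite μ] [SFinite ν]
    {J : α → β → ℝ} {T : α × β → ℝ} (hT : Integrable T (μ.prod ν)) (hJ : ∀ x y, 0 ≤ J x y)
    (hJT : ∀ᵐ x ∂μ, ∀ᵐ y ∂ν, J x y ≤ T (x, y)) :
    ∫ x, ∫ y, J x y ∂ν ∂μ ≤ ∫ z, T z ∂μ.prod ν := by
  rw [integral_prod T hT]
  refine integral_mono_of_nonneg (.of_forall fun x => integral_nonneg (hJ x))
    hT.integral_prod_left ?_
  filter_upwards [hJT, hT.prod_right_ae] with x hJTx hTx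
  exact integral_mono_of_nonneg (.of_forall (hJ x)) hTx hJTx

end Fubini

section Weighted

variable {α β : Type*} [MeasurableSpace α] [MeasurableSpace β]

theorem MeasureTheory.Integrable.of_integral_eq_one {μ : Measure α} {f : α → ℝ}
    (hf : ∫ x, f x ∂μ = 1) : Integrable f μ :=
  .of_integral_ne_zero (by rw [hf]; exact one_ne_zero)

theorem sq_integral_mul_sub_le_integral_sq_sub_mul {ν : Measure α} {w h : α → ℝ} {C : ℝ}
    (hw0 : 0 ≤ᵐ[ν] w) (hw1 : ∫ x, w x ∂ν = 1) (hh : AEStronglyMeasurable h ν)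
    (hhC : ∀ᵐ x ∂ν, |h x| ≤ C) (c : ℝ) :
    (∫ x, h x * w x ∂ν - c) ^ 2 ≤ ∫ x, (h x - c) ^ 2 * w x ∂ν := by
  have hw : Integrable w ν := .of_integral_eq_one hw1
  set m := ∫ x, h x * w x ∂ν
  have hhw : Integrable (fun x => h x * w x) ν := hw.bdd_mul hh hhC
  have hdev : Integrable (fun x => (h x - m) ^ 2 * w x) ν :=
    hw.bdd_mul (c := (C + |m|) ^ 2) (by fun_prop) <| by
      filter_upwards [hhC] with x hx
      rw [Real.norm_eq_abs, abs_pow]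
      exact pow_le_pow_left₀ (abs_nonneg _) ((abs_sub _ _).trans (by linarith)) 2
  have hdev_add : Integrable (fun x => (h x - m) ^ 2 * w x + 2 * (m - c) * (h x * w x)) ν :=
    hdev.add (hhw.const_mul _)
  have hsplit : ∫ x, (h x - c) ^ 2 * w x ∂ν = ∫ x, (h x - m) ^ 2 * w x ∂ν + (m - c) ^ 2 := by
    calc ∫ x, (h x - c) ^ 2 * w x ∂ν
        = ∫ x, ((h x - m) ^ 2 * w x + 2 * (m - c) * (h x * w x)
            + ((m - c) ^ 2 - 2 * (m - c) * m) * w x) ∂ν := by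
          congr 1; ext x; ring
      _ = ∫ x, (h x - m) ^ 2 * w x ∂ν + (m - c) ^ 2 := by
          rw [integral_add hdev_add (hw.const_mul _), integral_add hdev (hhw.const_mul _),
            integral_const_mul, integral_const_mul, hw1]
          ring
  have hvar : 0 ≤ ∫ x, (h x - m) ^ 2 * w x ∂ν :=
    integral_nonneg_of_ae <| by
      filter_upwards [hw0] with x hx using mul_nonneg (sq_nonneg _) hx
  linarith

theorem integrable_uncurry_of_integral_eq_one {μ : Measure α} {ν : Measure β} [IsFiniteMeasure μ]
    [SFinite ν] {p : α → β → ℝ} (hp : AEStronglyMeasurable (Function.uncurry p) (μ.prod ν))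
    (hp0 : ∀ᵐ x ∂μ, 0 ≤ᵐ[ν] p x) (hp1 : ∀ᵐ x ∂μ, ∫ y, p x y ∂ν = 1) :
    Integrable (Function.uncurry p) (μ.prod ν) := by
  refine (integrable_prod_iff hp).2 ⟨?_, (integrable_const (1 : ℝ)).congr ?_⟩
  · filter_upwards [hp1] with x hx using Integrable.of_integral_eq_one hx
  · filter_upwards [hp0, hp1] with x hx0 hx1
    rw [← hx1]
    exact integral_congr_ae (by filter_upwards [hx0] with y hy using (Real.norm_of_nonneg hy).symm)

end Weighted

section Coupling

variable {α β : Type*} [MeasurableSpace α] {μ : Measure α}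

/-- The paper's `g̃`, for the coupling with density `p`. -/
noncomputable def couplingPushforward (μ : Measure α) (p : α → β → ℝ) (f : α → α → ℝ)
    (y y' : β) : ℝ :=
  ∫ x, ∫ x', p x y * f x x' * p x' y' ∂μ ∂μ

theorem sq_couplingPushforward_sub_le [SFinite μ] {p : α → β → ℝ} {f : α → α → ℝ} {C : ℝ}
    {y y' : β} (hf : AEStronglyMeasurable (Function.uncurry f) (μ.prod μ))
    (hfC : ∀ᵐ z ∂μ.prod μ, |f z.1 z.2| ≤ C) (hy0 : 0 ≤ᵐ[μ] fun x => p x y)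
    (hy0' : 0 ≤ᵐ[μ] fun x => p x y') (hy1 : ∫ x, p x y ∂μ = 1) (hy1' : ∫ x, p x y' ∂μ = 1)
    (c : ℝ) :
    (couplingPushforward μ p f y y' - c) ^ 2 ≤
      ∫ z, (f z.1 z.2 - c) ^ 2 * (p z.1 y * p z.2 y') ∂μ.prod μ := by
  have hw1 : ∫ z, p z.1 y * p z.2 y' ∂μ.prod μ = 1 := by
    rw [integral_prod_mul (fun x => p x y) (fun x => p x y'), hy1, hy1', one_mul]
  have hw0 : 0 ≤ᵐ[μ.prod μ] fun z => p z.1 y * p z.2 y' := by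
    filter_upwards [Measure.quasiMeasurePreserving_fst.ae hy0,
      Measure.quasiMeasurePreserving_snd.ae hy0'] with z h h' using mul_nonneg h h'
  have hfw : Integrable (fun z => f z.1 z.2 * (p z.1 y * p z.2 y')) (μ.prod μ) :=
    (Integrable.of_integral_eq_one hw1).bdd_mul hf hfC
  have hpush : couplingPushforward μ p f y y' =
      ∫ z, f z.1 z.2 * (p z.1 y * p z.2 y') ∂μ.prod μ := by
    rw [couplingPushforward, integral_integral <|
      hfw.congr (.of_forall fun z => by simp only [Function.uncurry_def]; ring)]
    exact integral_congr_ae (.of_forall fun z => by ring)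
  rw [hpush]
  exact sq_integral_mul_sub_le_integral_sq_sub_mul hw0 hw1 hf hfC c

def gromovWassersteinIntegrand (f : α → α → ℝ) (g : β → β → ℝ) (p : α → β → ℝ)
    (z : (α × β) × α × β) : ℝ :=
  (f z.1.1 z.2.1 - g z.1.2 z.2.2) ^ 2 * (p z.1.1 z.1.2 * p z.2.1 z.2.2)

variable [MeasurableSpace β] {ν : Measure β}

theorem integrable_gromovWassersteinIntegrand [IsFiniteMeasure μ] [SFinite ν]
    {f : α → α → ℝ} {g : β → β → ℝ} {p : α → β → ℝ} {C : ℝ}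
    (hf : AEStronglyMeasurable (Function.uncurry f) (μ.prod μ))
    (hg : AEStronglyMeasurable (Function.uncurry g) (ν.prod ν))
    (hp : AEStronglyMeasurable (Function.uncurry p) (μ.prod ν))
    (hfC : ∀ᵐ z ∂μ.prod μ, |f z.1 z.2| ≤ C) (hgC : ∀ᵐ z ∂ν.prod ν, |g z.1 z.2| ≤ C)
    (hp0 : ∀ᵐ z ∂μ.prod ν, 0 ≤ p z.1 z.2) (hp1 : ∀ᵐ x ∂μ, ∫ y, p x y ∂ν = 1) :
    Integrable (gromovWassersteinIntegrand f g p) ((μ.prod ν).prod (μ.prod ν)) := by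
  have hP := integrable_uncurry_of_integral_eq_one hp (Measure.ae_ae_of_ae_prod hp0) hp1
  have hcomm := (measurePreserving_prodProdProdComm μ ν μ ν).quasiMeasurePreserving
  have hα : Measure.QuasiMeasurePreserving (fun z : (α × β) × α × β => (z.1.1, z.2.1))
      ((μ.prod ν).prod (μ.prod ν)) (μ.prod μ) := Measure.quasiMeasurePreserving_fst.comp hcomm
  have hβ : Measure.QuasiMeasurePreserving (fun z : (α × β) × α × β => (z.1.2, z.2.2))
      ((μ.prod ν).prod (μ.prod ν)) (ν.prod ν) := Measure.quasiMeasurePreserving_snd.comp hcomm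
  refine (hP.mul_prod hP).bdd_mul (c := (2 * C) ^ 2)
    (((hf.comp_quasiMeasurePreserving hα).sub (hg.comp_quasiMeasurePreserving hβ)).pow 2) ?_
  filter_upwards [hα.ae hfC, hβ.ae hgC] with z hfz hgz
  rw [Real.norm_eq_abs, abs_pow]
  exact pow_le_pow_left₀ (abs_nonneg _) ((abs_sub _ _).trans (by linarith)) 2

theorem integral_sq_couplingPushforward_sub_le [IsFiniteMeasure μ] [SFinite ν]
    {f : α → α → ℝ} {g : β → β → ℝ} {p : α → β → ℝ} {C : ℝ}
    (hf : AEStronglyMeasurable (Function.uncurry f) (μ.prod μ))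
    (hg : AEStronglyMeasurable (Function.uncurry g) (ν.prod ν))
    (hp : AEStronglyMeasurable (Function.uncurry p) (μ.prod ν))
    (hfC : ∀ᵐ z ∂μ.prod μ, |f z.1 z.2| ≤ C) (hgC : ∀ᵐ z ∂ν.prod ν, |g z.1 z.2| ≤ C)
    (hp0 : ∀ᵐ z ∂μ.prod ν, 0 ≤ p z.1 z.2) (hp1 : ∀ᵐ x ∂μ, ∫ y, p x y ∂ν = 1)
    (hp2 : ∀ᵐ y ∂ν, ∫ x, p x y ∂μ = 1) :
    ∫ y, ∫ y', (couplingPushforward μ p f y y' - g y y') ^ 2 ∂ν ∂ν ≤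
      ∫ x, ∫ y, ∫ x', ∫ y', (f x x' - g y y') ^ 2 * (p x y * p x' y') ∂ν ∂μ ∂ν ∂μ := by
  have hH := integrable_gromovWassersteinIntegrand hf hg hp hfC hgC hp0 hp1
  set H := gromovWassersteinIntegrand f g p
  -- `e ((y, y'), (x, x')) = ((x, y), (x', y'))`
  set e : (β × β) × α × α ≃ᵐ (α × β) × α × β :=
    MeasurableEquiv.prodComm.trans (MeasurableEquiv.prodProdProdComm α α β β)
  have he : MeasurePreserving e ((ν.prod ν).prod (μ.prod μ)) ((μ.prod ν).prod (μ.prod ν)) :=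
    (measurePreserving_prodProdProdComm μ μ ν ν).comp Measure.measurePreserving_swap
  have hHe : Integrable (fun z => H (e z)) ((ν.prod ν).prod (μ.prod μ)) :=
    (he.integrable_comp hH.aestronglyMeasurable).2 hH
  have hp0' : ∀ᵐ y ∂ν, 0 ≤ᵐ[μ] fun x => p x y :=
    Measure.ae_ae_of_ae_prod (Measure.measurePreserving_swap.quasiMeasurePreserving.ae hp0)
  calc _ ≤ ∫ Y, ∫ X, H (e (Y, X)) ∂μ.prod μ ∂ν.prod ν := by
        refine integral_integral_le_integral_prod hHe.integral_prod_left
          (fun _ _ => sq_nonneg _) ?_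
        filter_upwards [hp2, hp0'] with y hy1 hy0
        filter_upwards [hp2, hp0'] with y' hy1' hy0'
        exact sq_couplingPushforward_sub_le hf hfC hy0 hy0' hy1 hy1' _
    _ = ∫ z, H (e z) ∂(ν.prod ν).prod (μ.prod μ) := (integral_prod _ hHe).symm
    _ = ∫ z, H z ∂(μ.prod ν).prod (μ.prod ν) := he.integral_comp' H
    _ = _ := integral_prod_prod hH

end Coupling

theorem ae_restrict_prod_restrict_of_forall_mem {α β : Type*} [MeasurableSpace α]
    [MeasurableSpace β] {μ : Measure α} {ν : Measure β} [SFinite μ] [SFinite ν] {s : Set α}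
    {t : Set β} (hs : MeasurableSet s) (ht : MeasurableSet t) {P : α → β → Prop}
    (h : ∀ x ∈ s, ∀ y ∈ t, P x y) : ∀ᵐ z ∂(μ.restrict s).prod (ν.restrict t), P z.1 z.2 := by
  rw [Measure.prod_restrict]
  exact ae_restrict_of_forall_mem (hs.prod ht) fun z hz => h _ hz.1 _ hz.2

theorem graphon_alignment_bound_general
    (f g p : ℝ → ℝ → ℝ)
    (hf : Measurable fun q : ℝ × ℝ => f q.1 q.2)
    (hg : Measurable fun q : ℝ × ℝ => g q.1 q.2)
    (hp : Measurable fun q : ℝ × ℝ => p q.1 q.2)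
    (hf01 : ∀ x ∈ Set.Icc (0:ℝ) 1, ∀ y ∈ Set.Icc (0:ℝ) 1, f x y ∈ Set.Icc (0:ℝ) 1)
    (hg01 : ∀ x ∈ Set.Icc (0:ℝ) 1, ∀ y ∈ Set.Icc (0:ℝ) 1, g x y ∈ Set.Icc (0:ℝ) 1)
    (hppos : ∀ x ∈ Set.Icc (0:ℝ) 1, ∀ y ∈ Set.Icc (0:ℝ) 1, 0 ≤ p x y)
    (hmarg1 : ∀ x ∈ Set.Icc (0:ℝ) 1, ∫ y in Set.Icc (0:ℝ) 1, p x y = 1)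
    (hmarg2 : ∀ y ∈ Set.Icc (0:ℝ) 1, ∫ x in Set.Icc (0:ℝ) 1, p x y = 1) :
    (∫ y in Set.Icc (0:ℝ) 1, ∫ y' in Set.Icc (0:ℝ) 1,
        ((∫ x in Set.Icc (0:ℝ) 1, ∫ x' in Set.Icc (0:ℝ) 1,
            p x y * f x x' * p x' y') - g y y') ^ 2) ≤
      ∫ x in Set.Icc (0:ℝ) 1, ∫ y in Set.Icc (0:ℝ) 1,
        ∫ x' in Set.Icc (0:ℝ) 1, ∫ y' in Set.Icc (0:ℝ) 1,
          (f x x' - g y y') ^ 2 * (p x y * p x' y') := by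
  have hI : MeasurableSet (Set.Icc (0:ℝ) 1) := measurableSet_Icc
  have habs {h : ℝ → ℝ → ℝ} (h01 : ∀ x ∈ Set.Icc (0:ℝ) 1, ∀ y ∈ Set.Icc (0:ℝ) 1,
      h x y ∈ Set.Icc (0:ℝ) 1) :
      ∀ᵐ z ∂(volume.restrict (Set.Icc (0:ℝ) 1)).prod (volume.restrict (Set.Icc (0:ℝ) 1)),
        |h z.1 z.2| ≤ 1 :=
    ae_restrict_prod_restrict_of_forall_mem hI hI fun x hx y hy =>
      abs_le.2 ⟨by linarith [(h01 x hx y hy).1], (h01 x hx y hy).2⟩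
  exact integral_sq_couplingPushforward_sub_le hf.aestronglyMeasurable hg.aestronglyMeasurable
    hp.aestronglyMeasurable (habs hf01) (habs hg01)
    (ae_restrict_prod_restrict_of_forall_mem hI hI hppos) (ae_restrict_of_forall_mem hI hmarg1)
    (ae_restrict_of_forall_mem hI hmarg2)

/-- alignment bound for graphons. `f g : [0,1]² → [0,1]` are
graphons (symmetric measurable), `p` is the density of a coupling `π*` of
Lebesgue measure on `[0,1]` with itself (nonnegative, both marginals uniform),
and `GW₂²(f,g)` is achieved by `π*`, i.e. equals the quadruple integral
`∬∬ (f(x,x') − g(y,y'))² p(x,y) p(x',y') dx dy dx' dy'`. With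
`g̃(y,y') = ∬ p(x,y) f(x,x') p(x',y') dx dx'`, one has
`‖g̃ − g‖₂² ≤ GW₂²(f,g)`. -/
theorem graphon_alignment_bound
    (f g p : ℝ → ℝ → ℝ)
    (hf : Measurable fun q : ℝ × ℝ => f q.1 q.2)
    (hg : Measurable fun q : ℝ × ℝ => g q.1 q.2)
    (hp : Measurable fun q : ℝ × ℝ => p q.1 q.2)
    (hfsym : ∀ x y, f x y = f y x)
    (hgsym : ∀ x y, g x y = g y x)
    (hf01 : ∀ x ∈ Set.Icc (0:ℝ) 1, ∀ y ∈ Set.Icc (0:ℝ) 1, f x y ∈ Set.Icc (0:ℝ) 1)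
    (hg01 : ∀ x ∈ Set.Icc (0:ℝ) 1, ∀ y ∈ Set.Icc (0:ℝ) 1, g x y ∈ Set.Icc (0:ℝ) 1)
    (hppos : ∀ x ∈ Set.Icc (0:ℝ) 1, ∀ y ∈ Set.Icc (0:ℝ) 1, 0 ≤ p x y)
    (hmarg1 : ∀ x ∈ Set.Icc (0:ℝ) 1, ∫ y in Set.Icc (0:ℝ) 1, p x y = 1)
    (hmarg2 : ∀ y ∈ Set.Icc (0:ℝ) 1, ∫ x in Set.Icc (0:ℝ) 1, p x y = 1) :
    (∫ y in Set.Icc (0:ℝ) 1, ∫ y' in Set.Icc (0:ℝ) 1,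
        ((∫ x in Set.Icc (0:ℝ) 1, ∫ x' in Set.Icc (0:ℝ) 1,
            p x y * f x x' * p x' y') - g y y') ^ 2) ≤
      ∫ x in Set.Icc (0:ℝ) 1, ∫ y in Set.Icc (0:ℝ) 1,
        ∫ x' in Set.Icc (0:ℝ) 1, ∫ y' in Set.Icc (0:ℝ) 1,
          (f x x' - g y y') ^ 2 * (p x y * p x' y') :=
  graphon_alignment_bound_general f g p hf hg hp hf01 hg01 hppos hmarg1 hmarg2
end

section
/- Let P_S, P̂_S ∈ ℝ^{n_S × n_S} and P_T, P̂_T ∈ ℝ^{n_T × n_T}. Define the discrete squared GW distance GW₂²(A, B) = inf over couplings π ∈ Γ of Σ_{i,i',j,j'} (A_{ii'} − B_{jj'})² π_{ij} π_{i'j'}, where Γ is the set of n_S × n_T nonnegative matrices with row sums 1/n_S and column sums 1/n_T. If (1/n_S²)‖P̂_S − P_S‖_F² ≤ δ_S and (1/n_T²)‖P̂_T − P_T‖_F² ≤ δ_T, then GW₂²(P_S, P_T) ≤ 4(GW₂²(P̂_S, P̂_T) + δ_S + δ_T). -/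
open BigOperators

/-- The set of couplings of the uniform distributions on `Fin nS` and
`Fin nT`: nonnegative matrices with row sums `1/nS` and column sums `1/nT`. -/
def Coupling (nS nT : ℕ) : Set (Matrix (Fin nS) (Fin nT) ℝ) :=
  {π | (∀ i j, 0 ≤ π i j) ∧ (∀ i, ∑ j, π i j = 1 / (nS : ℝ)) ∧
        (∀ j, ∑ i, π i j = 1 / (nT : ℝ))}

/-- The GW objective of a coupling `π` for matrices `A`, `B`. -/
def GWobj {nS nT : ℕ} (A : Matrix (Fin nS) (Fin nS) ℝ)
    (B : Matrix (Fin nT) (Fin nT) ℝ) (π : Matrix (Fin nS) (Fin nT) ℝ) : ℝ :=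
  ∑ i, ∑ i', ∑ j, ∑ j', (A i i' - B j j') ^ 2 * (π i j * π i' j')

/-- The discrete squared Gromov–Wasserstein distance. -/
noncomputable def GW2 {nS nT : ℕ} (A : Matrix (Fin nS) (Fin nS) ℝ)
    (B : Matrix (Fin nT) (Fin nT) ℝ) : ℝ :=
  sInf (GWobj A B '' Coupling nS nT)

/-- Swap the two pairs of summation indices in a quadruple sum. -/
lemma gw_sum4_comm {a b : ℕ} (F : Fin a → Fin a → Fin b → Fin b → ℝ) :
    ∑ i, ∑ i', ∑ j, ∑ j', F i i' j j' = ∑ j, ∑ j', ∑ i, ∑ i', F i i' j j' := by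
  calc ∑ i, ∑ i', ∑ j, ∑ j', F i i' j j'
      = ∑ i, ∑ j, ∑ i', ∑ j', F i i' j j' :=
        Finset.sum_congr rfl fun i _ => Finset.sum_comm
    _ = ∑ j, ∑ i, ∑ i', ∑ j', F i i' j j' := Finset.sum_comm
    _ = ∑ j, ∑ i, ∑ j', ∑ i', F i i' j j' :=
        Finset.sum_congr rfl fun j _ => Finset.sum_congr rfl fun i _ => Finset.sum_comm
    _ = ∑ j, ∑ j', ∑ i, ∑ i', F i i' j j' :=
        Finset.sum_congr rfl fun j _ => Finset.sum_comm

/-- Factor a constant times a product sum. -/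
lemma gw_inner_factor {n : ℕ} (c : ℝ) (f g : Fin n → ℝ) :
    ∑ j, ∑ j', c * (f j * g j') = c * ((∑ j, f j) * (∑ j', g j')) := by
  rw [Finset.sum_mul_sum]; simp [Finset.mul_sum]

/-- In the degenerate case the GW distance is zero. -/
lemma gw2_degenerate {nS nT : ℕ} (h : nS = 0 ∨ nT = 0)
    (A : Matrix (Fin nS) (Fin nS) ℝ) (B : Matrix (Fin nT) (Fin nT) ℝ) :
    GW2 A B = 0 := by
  have himg : GWobj A B '' Coupling nS nT ⊆ {0} := by
    rintro _ ⟨π, -, rfl⟩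
    rcases h with h | h <;> subst h <;> simp [GWobj]
  rcases Set.subset_singleton_iff_eq.mp himg with h | h <;> rw [GW2, h]
  · exact Real.sInf_empty
  · exact csInf_singleton 0

/-- the population GW distance is bounded by four times the
empirical GW distance plus the average squared Frobenius estimation errors. -/
theorem gw_population_le_empirical
    {nS nT : ℕ}
    (PS PhS : Matrix (Fin nS) (Fin nS) ℝ)
    (PT PhT : Matrix (Fin nT) (Fin nT) ℝ)
    (δS δT : ℝ)
    (hS : (1 / (nS : ℝ) ^ 2) * ∑ i, ∑ i', (PhS i i' - PS i i') ^ 2 ≤ δS)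
    (hT : (1 / (nT : ℝ) ^ 2) * ∑ j, ∑ j', (PhT j j' - PT j j') ^ 2 ≤ δT) :
    GW2 PS PT ≤ 4 * (GW2 PhS PhT + δS + δT) := by
  have hδS : 0 ≤ δS := le_trans (by positivity) hS
  have hδT : 0 ≤ δT := le_trans (by positivity) hT
  rcases eq_or_ne nS 0 with hnS | hnS
  · rw [gw2_degenerate (Or.inl hnS), gw2_degenerate (Or.inl hnS)]; linarith
  rcases eq_or_ne nT 0 with hnT | hnT
  · rw [gw2_degenerate (Or.inr hnT), gw2_degenerate (Or.inr hnT)]; linarith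
  have hnS' : (0:ℝ) < (nS:ℝ) := by exact_mod_cast Nat.pos_of_ne_zero hnS
  have hnT' : (0:ℝ) < (nT:ℝ) := by exact_mod_cast Nat.pos_of_ne_zero hnT
  -- the uniform coupling
  have hunif : (fun _ _ => 1 / ((nS:ℝ) * (nT:ℝ)) : Matrix (Fin nS) (Fin nT) ℝ) ∈
      Coupling nS nT := by
    refine ⟨fun i j => by positivity, fun i => ?_, fun j => ?_⟩
    · simp only [Finset.sum_const, Finset.card_univ, Fintype.card_fin, nsmul_eq_mul]
      field_simp
    · simp only [Finset.sum_const, Finset.card_univ, Fintype.card_fin, nsmul_eq_mul]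
      field_simp
  -- key pointwise bound on the objective
  have key : ∀ π ∈ Coupling nS nT,
      GWobj PS PT π ≤ 4 * (GWobj PhS PhT π + δS + δT) := by
    rintro π ⟨hpos, hrow, hcol⟩
    have hsum : GWobj PS PT π ≤
        ∑ i, ∑ i', ∑ j, ∑ j',
          4 * (((PhS i i' - PhT j j') ^ 2 + (PhS i i' - PS i i') ^ 2
            + (PhT j j' - PT j j') ^ 2) * (π i j * π i' j')) := by
      refine Finset.sum_le_sum fun i _ => Finset.sum_le_sum fun i' _ =>
        Finset.sum_le_sum fun j _ => Finset.sum_le_sum fun j' _ => ?_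
      have hw : 0 ≤ π i j * π i' j' := mul_nonneg (hpos i j) (hpos i' j')
      have hX : (PS i i' - PT j j') ^ 2 ≤
          4 * ((PhS i i' - PhT j j') ^ 2 + (PhS i i' - PS i i') ^ 2
            + (PhT j j' - PT j j') ^ 2) := by
        nlinarith [sq_nonneg (PhS i i' - PhT j j' + (PhS i i' - PS i i')),
          sq_nonneg (PhS i i' - PhT j j' - (PhT j j' - PT j j')),
          sq_nonneg ((PhS i i' - PS i i') + (PhT j j' - PT j j')),
          sq_nonneg (PhS i i' - PhT j j'), sq_nonneg (PhS i i' - PS i i'),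
          sq_nonneg (PhT j j' - PT j j')]
      calc (PS i i' - PT j j') ^ 2 * (π i j * π i' j')
          ≤ (4 * ((PhS i i' - PhT j j') ^ 2 + (PhS i i' - PS i i') ^ 2
              + (PhT j j' - PT j j') ^ 2)) * (π i j * π i' j') :=
            mul_le_mul_of_nonneg_right hX hw
        _ = 4 * (((PhS i i' - PhT j j') ^ 2 + (PhS i i' - PS i i') ^ 2
              + (PhT j j' - PT j j') ^ 2) * (π i j * π i' j')) := by ring
    -- the source error term
    have hS1 : (∑ i, ∑ i', ∑ j, ∑ j', (PhS i i' - PS i i') ^ 2 * (π i j * π i' j'))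
        = (1 / (nS:ℝ) ^ 2) * ∑ i, ∑ i', (PhS i i' - PS i i') ^ 2 := by
      have h1 : ∀ i i', ∑ j, ∑ j', (PhS i i' - PS i i') ^ 2 * (π i j * π i' j')
          = (PhS i i' - PS i i') ^ 2 * (1 / (nS:ℝ) * (1 / (nS:ℝ))) := by
        intro i i'
        rw [gw_inner_factor, hrow i, hrow i']
      simp only [h1, ← Finset.sum_mul]
      ring
    -- the target error term
    have hS2 : (∑ i, ∑ i', ∑ j, ∑ j', (PhT j j' - PT j j') ^ 2 * (π i j * π i' j'))
        = (1 / (nT:ℝ) ^ 2) * ∑ j, ∑ j', (PhT j j' - PT j j') ^ 2 := by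
      rw [gw_sum4_comm (fun i i' j j' => (PhT j j' - PT j j') ^ 2 * (π i j * π i' j'))]
      have h1 : ∀ j j', ∑ i, ∑ i', (PhT j j' - PT j j') ^ 2 * (π i j * π i' j')
          = (PhT j j' - PT j j') ^ 2 * (1 / (nT:ℝ) * (1 / (nT:ℝ))) := by
        intro j j'
        rw [gw_inner_factor, hcol j, hcol j']
      simp only [h1, ← Finset.sum_mul]
      ring
    have hexpand : (∑ i, ∑ i', ∑ j, ∑ j',
        4 * (((PhS i i' - PhT j j') ^ 2 + (PhS i i' - PS i i') ^ 2
          + (PhT j j' - PT j j') ^ 2) * (π i j * π i' j')))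
        = 4 * (GWobj PhS PhT π
          + (∑ i, ∑ i', ∑ j, ∑ j', (PhS i i' - PS i i') ^ 2 * (π i j * π i' j'))
          + (∑ i, ∑ i', ∑ j, ∑ j', (PhT j j' - PT j j') ^ 2 * (π i j * π i' j'))) := by
      simp only [GWobj, add_mul, mul_add, Finset.sum_add_distrib, Finset.mul_sum]
    rw [hexpand, hS1, hS2] at hsum
    have := hsum
    nlinarith [this, hS, hT]
  -- the objective is bounded below by 0 on couplings
  have hbdd : BddBelow (GWobj PS PT '' Coupling nS nT) := by
    refine ⟨0, ?_⟩
    rintro _ ⟨π, ⟨hpos, -, -⟩, rfl⟩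
    refine Finset.sum_nonneg fun i _ => Finset.sum_nonneg fun i' _ =>
      Finset.sum_nonneg fun j _ => Finset.sum_nonneg fun j' _ =>
      mul_nonneg (sq_nonneg _) (mul_nonneg (hpos i j) (hpos i' j'))
  have hne : (GWobj PhS PhT '' Coupling nS nT).Nonempty :=
    ⟨_, Set.mem_image_of_mem _ hunif⟩
  have main : GW2 PS PT / 4 - (δS + δT) ≤ GW2 PhS PhT := by
    refine le_csInf hne ?_
    rintro _ ⟨π, hπ, rfl⟩
    have h1 : GW2 PS PT ≤ GWobj PS PT π := csInf_le hbdd (Set.mem_image_of_mem _ hπ)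
    have h2 := key π hπ
    linarith
  linarith
end

section
/- Under the same setup, GW₂²(P̂_S, P̂_T) ≤ 4(GW₂²(P_S, P_T) + δ_S + δ_T); i.e., the discrete squared GW distance between estimated matrices is controlled by the GW distance between true matrices plus the average Frobenius estimation errors. -/
open BigOperators

lemma GWobj_nonneg {nS nT : ℕ} (A : Matrix (Fin nS) (Fin nS) ℝ)
    (B : Matrix (Fin nT) (Fin nT) ℝ) {π : Matrix (Fin nS) (Fin nT) ℝ}
    (hπ : π ∈ Coupling nS nT) : 0 ≤ GWobj A B π := by
  refine Finset.sum_nonneg fun i _ => Finset.sum_nonneg fun i' _ =>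
    Finset.sum_nonneg fun j _ => Finset.sum_nonneg fun j' _ => ?_
  exact mul_nonneg (sq_nonneg _) (mul_nonneg (hπ.1 i j) (hπ.1 i' j'))

lemma inner_prod {nS nT : ℕ} {π : Matrix (Fin nS) (Fin nT) ℝ}
    (c : ℝ) (i i' : Fin nS) :
    ∑ j, ∑ j', c * (π i j * π i' j') = c * ((∑ j, π i j) * (∑ j', π i' j')) := by
  rw [Finset.sum_mul_sum, Finset.mul_sum]
  exact Finset.sum_congr rfl fun j _ => by rw [Finset.mul_sum]

lemma sum_weight_S {nS nT : ℕ} {π : Matrix (Fin nS) (Fin nT) ℝ}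
    (hπ : π ∈ Coupling nS nT) (f : Fin nS → Fin nS → ℝ) :
    ∑ i, ∑ i', ∑ j, ∑ j', f i i' * (π i j * π i' j')
      = (1 / (nS : ℝ)) * (1 / (nS : ℝ)) * ∑ i, ∑ i', f i i' := by
  have : ∀ i i' : Fin nS, ∑ j, ∑ j', f i i' * (π i j * π i' j')
      = (1 / (nS : ℝ)) * (1 / (nS : ℝ)) * f i i' := by
    intro i i'
    rw [inner_prod, hπ.2.1 i, hπ.2.1 i']
    ring
  calc ∑ i, ∑ i', ∑ j, ∑ j', f i i' * (π i j * π i' j')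
      = ∑ i, ∑ i', (1 / (nS : ℝ)) * (1 / (nS : ℝ)) * f i i' :=
        Finset.sum_congr rfl fun i _ => Finset.sum_congr rfl fun i' _ => this i i'
    _ = (1 / (nS : ℝ)) * (1 / (nS : ℝ)) * ∑ i, ∑ i', f i i' := by
        simp only [Finset.mul_sum]

lemma swap4 {nS nT : ℕ} (F : Fin nS → Fin nS → Fin nT → Fin nT → ℝ) :
    ∑ i, ∑ i', ∑ j, ∑ j', F i i' j j' = ∑ j, ∑ j', ∑ i, ∑ i', F i i' j j' := by
  calc ∑ i, ∑ i', ∑ j, ∑ j', F i i' j j'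
      = ∑ i, ∑ j, ∑ i', ∑ j', F i i' j j' :=
        Finset.sum_congr rfl fun i _ => Finset.sum_comm ..
    _ = ∑ j, ∑ i, ∑ i', ∑ j', F i i' j j' := Finset.sum_comm ..
    _ = ∑ j, ∑ i, ∑ j', ∑ i', F i i' j j' :=
        Finset.sum_congr rfl fun j _ => Finset.sum_congr rfl fun i _ =>
          Finset.sum_comm ..
    _ = ∑ j, ∑ j', ∑ i, ∑ i', F i i' j j' :=
        Finset.sum_congr rfl fun j _ => Finset.sum_comm ..

lemma sum_weight_T {nS nT : ℕ} {π : Matrix (Fin nS) (Fin nT) ℝ}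
    (hπ : π ∈ Coupling nS nT) (g : Fin nT → Fin nT → ℝ) :
    ∑ i, ∑ i', ∑ j, ∑ j', g j j' * (π i j * π i' j')
      = (1 / (nT : ℝ)) * (1 / (nT : ℝ)) * ∑ j, ∑ j', g j j' := by
  rw [swap4]
  have : ∀ j j' : Fin nT, ∑ i, ∑ i', g j j' * (π i j * π i' j')
      = (1 / (nT : ℝ)) * (1 / (nT : ℝ)) * g j j' := by
    intro j j'
    have h := Finset.sum_mul_sum Finset.univ Finset.univ
      (fun i => π i j) (fun i' => π i' j')
    calc ∑ i, ∑ i', g j j' * (π i j * π i' j')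
        = g j j' * ((∑ i, π i j) * (∑ i', π i' j')) := by
          rw [h, Finset.mul_sum]
          exact Finset.sum_congr rfl fun i _ => by rw [Finset.mul_sum]
      _ = (1 / (nT : ℝ)) * (1 / (nT : ℝ)) * g j j' := by
          rw [hπ.2.2 j, hπ.2.2 j']; ring
  calc ∑ j, ∑ j', ∑ i, ∑ i', g j j' * (π i j * π i' j')
      = ∑ j, ∑ j', (1 / (nT : ℝ)) * (1 / (nT : ℝ)) * g j j' :=
        Finset.sum_congr rfl fun j _ => Finset.sum_congr rfl fun j' _ => this j j'
    _ = (1 / (nT : ℝ)) * (1 / (nT : ℝ)) * ∑ j, ∑ j', g j j' := by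
        simp only [Finset.mul_sum]

/-- the empirical GW distance is bounded by four times the
population GW distance plus the average squared Frobenius estimation errors. -/
theorem gw_empirical_le_population
    {nS nT : ℕ}
    (PS PhS : Matrix (Fin nS) (Fin nS) ℝ)
    (PT PhT : Matrix (Fin nT) (Fin nT) ℝ)
    (δS δT : ℝ)
    (hS : (1 / (nS : ℝ) ^ 2) * ∑ i, ∑ i', (PhS i i' - PS i i') ^ 2 ≤ δS)
    (hT : (1 / (nT : ℝ) ^ 2) * ∑ j, ∑ j', (PhT j j' - PT j j') ^ 2 ≤ δT) :
    GW2 PhS PhT ≤ 4 * (GW2 PS PT + δS + δT) := by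
  have hδS : 0 ≤ δS := le_trans (by positivity) hS
  have hδT : 0 ≤ δT := le_trans (by positivity) hT
  have hGWnn : 0 ≤ GW2 PS PT := by
    apply Real.sInf_nonneg
    rintro x ⟨π, hπ, rfl⟩
    exact GWobj_nonneg _ _ hπ
  by_cases hc : (Coupling nS nT).Nonempty
  · -- nonempty case: pointwise bound on each coupling, then take infima
    have key : ∀ π ∈ Coupling nS nT,
        GWobj PhS PhT π ≤ 4 * (GWobj PS PT π + δS + δT) := by
      intro π hπ
      have step1 : GWobj PhS PhT π ≤
          ∑ i, ∑ i', ∑ j, ∑ j',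
            (3 * ((PhS i i' - PS i i') ^ 2 + (PS i i' - PT j j') ^ 2
              + (PT j j' - PhT j j') ^ 2)) * (π i j * π i' j') := by
        refine Finset.sum_le_sum fun i _ => Finset.sum_le_sum fun i' _ =>
          Finset.sum_le_sum fun j _ => Finset.sum_le_sum fun j' _ => ?_
        refine mul_le_mul_of_nonneg_right ?_
          (mul_nonneg (hπ.1 i j) (hπ.1 i' j'))
        nlinarith [sq_nonneg ((PhS i i' - PS i i') - (PS i i' - PT j j')),
          sq_nonneg ((PhS i i' - PS i i') - (PT j j' - PhT j j')),
          sq_nonneg ((PS i i' - PT j j') - (PT j j' - PhT j j'))]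
      have split : ∑ i, ∑ i', ∑ j, ∑ j',
            (3 * ((PhS i i' - PS i i') ^ 2 + (PS i i' - PT j j') ^ 2
              + (PT j j' - PhT j j') ^ 2)) * (π i j * π i' j')
          = 3 * ((∑ i, ∑ i', ∑ j, ∑ j', (PhS i i' - PS i i') ^ 2 * (π i j * π i' j'))
            + GWobj PS PT π
            + (∑ i, ∑ i', ∑ j, ∑ j', (PT j j' - PhT j j') ^ 2 * (π i j * π i' j'))) := by
        simp only [GWobj, Finset.mul_sum, ← Finset.sum_add_distrib]
        refine Finset.sum_congr rfl fun i _ => Finset.sum_congr rfl fun i' _ =>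
          Finset.sum_congr rfl fun j _ => Finset.sum_congr rfl fun j' _ => ?_
        ring
      have hSterm : ∑ i, ∑ i', ∑ j, ∑ j', (PhS i i' - PS i i') ^ 2 * (π i j * π i' j')
          ≤ δS := by
        rw [sum_weight_S hπ (fun i i' => (PhS i i' - PS i i') ^ 2)]
        calc (1 / (nS : ℝ)) * (1 / (nS : ℝ)) * ∑ i, ∑ i', (PhS i i' - PS i i') ^ 2
            = (1 / (nS : ℝ) ^ 2) * ∑ i, ∑ i', (PhS i i' - PS i i') ^ 2 := by
              rw [div_mul_div_comm, one_mul, ← sq]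
          _ ≤ δS := hS
      have hTterm : ∑ i, ∑ i', ∑ j, ∑ j', (PT j j' - PhT j j') ^ 2 * (π i j * π i' j')
          ≤ δT := by
        rw [sum_weight_T hπ (fun j j' => (PT j j' - PhT j j') ^ 2)]
        calc (1 / (nT : ℝ)) * (1 / (nT : ℝ)) * ∑ j, ∑ j', (PT j j' - PhT j j') ^ 2
            = (1 / (nT : ℝ) ^ 2) * ∑ j, ∑ j', (PhT j j' - PT j j') ^ 2 := by
              rw [div_mul_div_comm, one_mul, ← sq]
              congr 1
              exact Finset.sum_congr rfl fun j _ => Finset.sum_congr rfl fun j' _ => by ring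
          _ ≤ δT := hT
      have hobj := GWobj_nonneg PS PT hπ
      calc GWobj PhS PhT π ≤ _ := step1
        _ = _ := split
        _ ≤ 4 * (GWobj PS PT π + δS + δT) := by nlinarith
    have hbdd : BddBelow (GWobj PhS PhT '' Coupling nS nT) := by
      refine ⟨0, ?_⟩
      rintro x ⟨π, hπ, rfl⟩
      exact GWobj_nonneg _ _ hπ
    have hle : ∀ π ∈ Coupling nS nT, GW2 PhS PhT ≤ 4 * (GWobj PS PT π + δS + δT) := by
      intro π hπ
      exact le_trans (csInf_le hbdd ⟨π, hπ, rfl⟩) (key π hπ)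
    have hlb : (GW2 PhS PhT - 4 * (δS + δT)) / 4 ≤ GW2 PS PT := by
      apply le_csInf (hc.image _)
      rintro x ⟨π, hπ, rfl⟩
      have := hle π hπ
      linarith
    linarith
  · -- coupling empty
    have : GWobj PhS PhT '' Coupling nS nT = ∅ := by
      rw [Set.not_nonempty_iff_eq_empty] at hc
      simp [hc]
    rw [GW2, this, Real.sInf_empty]
    nlinarith
end

section
/- If f, g : [0,1]² → [0,1] are graphons with GW₂(f, g) = 0 achieved by an optimal coupling π*, then the π*-projection g̃ of f equals g almost everywhere on [0,1]², where g̃(y,y') = ∬ π*(y,x) f(x,x') π*(x',y') dx dx'. -/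
set_option maxHeartbeats 2000000


open MeasureTheory

/-- equality case of the alignment bound. If the optimal coupling
density `p` achieves `GW₂(f,g) = 0`, i.e. the quadruple integral
`∬∬ (f(x,x') − g(y,y'))² p(x,y) p(x',y') dx dy dx' dy' = 0`, then the
projection `g̃(y,y') = ∬ p(x,y) f(x,x') p(x',y') dx dx'` equals `g` almost
everywhere on `[0,1]²`. -/
theorem graphon_alignment_equality_case
    (f g p : ℝ → ℝ → ℝ)
    (hf : Measurable fun q : ℝ × ℝ => f q.1 q.2)
    (hg : Measurable fun q : ℝ × ℝ => g q.1 q.2)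
    (hp : Measurable fun q : ℝ × ℝ => p q.1 q.2)
    (hfsym : ∀ x y, f x y = f y x)
    (hgsym : ∀ x y, g x y = g y x)
    (hf01 : ∀ x ∈ Set.Icc (0:ℝ) 1, ∀ y ∈ Set.Icc (0:ℝ) 1, f x y ∈ Set.Icc (0:ℝ) 1)
    (hg01 : ∀ x ∈ Set.Icc (0:ℝ) 1, ∀ y ∈ Set.Icc (0:ℝ) 1, g x y ∈ Set.Icc (0:ℝ) 1)
    (hppos : ∀ x ∈ Set.Icc (0:ℝ) 1, ∀ y ∈ Set.Icc (0:ℝ) 1, 0 ≤ p x y)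
    (hmarg1 : ∀ x ∈ Set.Icc (0:ℝ) 1, ∫ y in Set.Icc (0:ℝ) 1, p x y = 1)
    (hmarg2 : ∀ y ∈ Set.Icc (0:ℝ) 1, ∫ x in Set.Icc (0:ℝ) 1, p x y = 1)
    (hGWzero :
      (∫ x in Set.Icc (0:ℝ) 1, ∫ y in Set.Icc (0:ℝ) 1,
        ∫ x' in Set.Icc (0:ℝ) 1, ∫ y' in Set.Icc (0:ℝ) 1,
          (f x x' - g y y') ^ 2 * (p x y * p x' y')) = 0) :
    ∀ᵐ q ∂(volume.restrict (Set.Icc (0:ℝ) 1 ×ˢ Set.Icc (0:ℝ) 1)),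
      (∫ x in Set.Icc (0:ℝ) 1, ∫ x' in Set.Icc (0:ℝ) 1,
          p x q.1 * f x x' * p x' q.2) = g q.1 q.2 := by
  classical
  set I : Set ℝ := Set.Icc (0:ℝ) 1 with hIdef
  have hIm : MeasurableSet I := measurableSet_Icc
  set μ : Measure ℝ := volume.restrict I with hμdef
  have hμuniv : μ Set.univ = 1 := by
    rw [hμdef, Measure.restrict_apply_univ, hIdef, Real.volume_Icc]
    norm_num
  have haemem : ∀ᵐ t ∂μ, t ∈ I := ae_restrict_mem hIm
  -- integrability of the slices of `p`
  have hint1 : ∀ x ∈ I, Integrable (fun y => p x y) μ := by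
    intro x hx
    by_contra h
    have h1 := hmarg1 x hx
    rw [integral_undef h] at h1
    norm_num at h1
  have hint2 : ∀ y ∈ I, Integrable (fun x => p x y) μ := by
    intro y hy
    by_contra h
    have h1 := hmarg2 y hy
    rw [integral_undef h] at h1
    norm_num at h1
  -- lintegrals of the slices of `p`
  have hl1 : ∀ x ∈ I, ∫⁻ y, ENNReal.ofReal (p x y) ∂μ = 1 := by
    intro x hx
    have hnn : 0 ≤ᵐ[μ] fun y => p x y := by
      filter_upwards [haemem] with y hy using hppos x hx y hy
    rw [← ofReal_integral_eq_lintegral_ofReal (hint1 x hx) hnn, hmarg1 x hx, ENNReal.ofReal_one]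
  have hl2 : ∀ y ∈ I, ∫⁻ x, ENNReal.ofReal (p x y) ∂μ = 1 := by
    intro y hy
    have hnn : 0 ≤ᵐ[μ] fun x => p x y := by
      filter_upwards [haemem] with x hx using hppos x hx y hy
    rw [← ofReal_integral_eq_lintegral_ofReal (hint2 y hy) hnn, hmarg2 y hy, ENNReal.ofReal_one]
  -- master measurability
  have hA : Measurable fun r : (ℝ × ℝ) × ℝ × ℝ =>
      (f r.1.1 r.2.1 - g r.1.2 r.2.2) ^ 2 * (p r.1.1 r.1.2 * p r.2.1 r.2.2) := by
    apply Measurable.mul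
    · exact ((hf.comp (measurable_fst.fst.prodMk measurable_snd.fst)).sub
        (hg.comp (measurable_fst.snd.prodMk measurable_snd.snd))).pow_const 2
    · exact (hp.comp (measurable_fst.fst.prodMk measurable_fst.snd)).mul
        (hp.comp (measurable_snd.fst.prodMk measurable_snd.snd))
  have hΦ : Measurable fun r : (ℝ × ℝ) × ℝ × ℝ =>
      ENNReal.ofReal ((f r.1.1 r.2.1 - g r.1.2 r.2.2) ^ 2 * (p r.1.1 r.1.2 * p r.2.1 r.2.2)) :=
    ENNReal.measurable_ofReal.comp hA
  -- bounds on iterated lintegrals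
  have hb3 : ∀ x ∈ I, ∀ y ∈ I, ∀ x' ∈ I,
      (∫⁻ y', ENNReal.ofReal ((f x x' - g y y') ^ 2 * (p x y * p x' y')) ∂μ)
        ≤ ENNReal.ofReal (p x y) := by
    intro x hx y hy x' hx'
    have hmp : Measurable fun y' => ENNReal.ofReal (p x' y') :=
      ENNReal.measurable_ofReal.comp (hp.comp (measurable_const.prodMk measurable_id))
    calc (∫⁻ y', ENNReal.ofReal ((f x x' - g y y') ^ 2 * (p x y * p x' y')) ∂μ)
        ≤ ∫⁻ y', ENNReal.ofReal (p x y) * ENNReal.ofReal (p x' y') ∂μ := by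
          refine lintegral_mono_ae ?_
          filter_upwards [haemem] with y' hy'
          rw [← ENNReal.ofReal_mul (hppos x hx y hy)]
          apply ENNReal.ofReal_le_ofReal
          have h1 : (f x x' - g y y') ^ 2 ≤ 1 := by
            obtain ⟨hf0, hf1⟩ := hf01 x hx x' hx'
            obtain ⟨hg0, hg1⟩ := hg01 y hy y' hy'
            nlinarith
          calc (f x x' - g y y') ^ 2 * (p x y * p x' y')
              ≤ 1 * (p x y * p x' y') := by
                exact mul_le_mul_of_nonneg_right h1
                  (mul_nonneg (hppos x hx y hy) (hppos x' hx' y' hy'))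
            _ = p x y * p x' y' := one_mul _
      _ = ENNReal.ofReal (p x y) * ∫⁻ y', ENNReal.ofReal (p x' y') ∂μ :=
          lintegral_const_mul _ hmp
      _ = ENNReal.ofReal (p x y) := by rw [hl1 x' hx', mul_one]
  have hb2 : ∀ x ∈ I, ∀ y ∈ I,
      (∫⁻ x', ∫⁻ y', ENNReal.ofReal ((f x x' - g y y') ^ 2 * (p x y * p x' y')) ∂μ ∂μ)
        ≤ ENNReal.ofReal (p x y) := by
    intro x hx y hy
    calc (∫⁻ x', ∫⁻ y', ENNReal.ofReal ((f x x' - g y y') ^ 2 * (p x y * p x' y')) ∂μ ∂μ)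
        ≤ ∫⁻ _x', ENNReal.ofReal (p x y) ∂μ := by
          refine lintegral_mono_ae ?_
          filter_upwards [haemem] with x' hx' using hb3 x hx y hy x' hx'
      _ = ENNReal.ofReal (p x y) := by rw [lintegral_const, hμuniv, mul_one]
  have hb1 : ∀ x ∈ I,
      (∫⁻ y, ∫⁻ x', ∫⁻ y', ENNReal.ofReal ((f x x' - g y y') ^ 2 * (p x y * p x' y')) ∂μ ∂μ ∂μ)
        ≤ 1 := by
    intro x hx
    calc (∫⁻ y, ∫⁻ x', ∫⁻ y',
            ENNReal.ofReal ((f x x' - g y y') ^ 2 * (p x y * p x' y')) ∂μ ∂μ ∂μ)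
        ≤ ∫⁻ y, ENNReal.ofReal (p x y) ∂μ := by
          refine lintegral_mono_ae ?_
          filter_upwards [haemem] with y hy using hb2 x hx y hy
      _ = 1 := hl1 x hx
  have hbL :
      (∫⁻ x, ∫⁻ y, ∫⁻ x', ∫⁻ y',
          ENNReal.ofReal ((f x x' - g y y') ^ 2 * (p x y * p x' y')) ∂μ ∂μ ∂μ ∂μ) ≤ 1 := by
    calc (∫⁻ x, ∫⁻ y, ∫⁻ x', ∫⁻ y',
            ENNReal.ofReal ((f x x' - g y y') ^ 2 * (p x y * p x' y')) ∂μ ∂μ ∂μ ∂μ)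
        ≤ ∫⁻ _x, (1 : ENNReal) ∂μ := by
          refine lintegral_mono_ae ?_
          filter_upwards [haemem] with x hx using hb1 x hx
      _ = 1 := by rw [lintegral_one, hμuniv]
  -- Bochner integral to lintegral, level by level
  have hI3 : ∀ x ∈ I, ∀ y ∈ I, ∀ x' ∈ I,
      (∫ y', (f x x' - g y y') ^ 2 * (p x y * p x' y') ∂μ)
        = (∫⁻ y', ENNReal.ofReal ((f x x' - g y y') ^ 2 * (p x y * p x' y')) ∂μ).toReal := by
    intro x hx y hy x' hx'
    refine integral_eq_lintegral_of_nonneg_ae ?_ ?_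
    · filter_upwards [haemem] with y' hy'
      exact mul_nonneg (sq_nonneg _) (mul_nonneg (hppos x hx y hy) (hppos x' hx' y' hy'))
    · exact ((hA.comp
        ((measurable_const.prodMk measurable_const).prodMk
          (measurable_const.prodMk measurable_id))).stronglyMeasurable).aestronglyMeasurable
  have hI2 : ∀ x ∈ I, ∀ y ∈ I,
      (∫ x', ∫ y', (f x x' - g y y') ^ 2 * (p x y * p x' y') ∂μ ∂μ)
        = (∫⁻ x', ∫⁻ y',
            ENNReal.ofReal ((f x x' - g y y') ^ 2 * (p x y * p x' y')) ∂μ ∂μ).toReal := by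
    intro x hx y hy
    have hsm : AEStronglyMeasurable
        (fun x' => ∫ y', (f x x' - g y y') ^ 2 * (p x y * p x' y') ∂μ) μ := by
      have : StronglyMeasurable fun z : ℝ × ℝ =>
          (f x z.1 - g y z.2) ^ 2 * (p x y * p z.1 z.2) :=
        (hA.comp ((measurable_const.prodMk measurable_const).prodMk measurable_id)).stronglyMeasurable
      exact this.integral_prod_right'.aestronglyMeasurable
    rw [integral_eq_lintegral_of_nonneg_ae ?_ hsm]
    · congr 1
      refine lintegral_congr_ae ?_
      filter_upwards [haemem] with x' hx'
      rw [hI3 x hx y hy x' hx', ENNReal.ofReal_toReal]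
      exact (lt_of_le_of_lt (hb3 x hx y hy x' hx') ENNReal.ofReal_lt_top).ne
    · filter_upwards [haemem] with x' hx'
      rw [hI3 x hx y hy x' hx']
      exact ENNReal.toReal_nonneg
  have hI1 : ∀ x ∈ I,
      (∫ y, ∫ x', ∫ y', (f x x' - g y y') ^ 2 * (p x y * p x' y') ∂μ ∂μ ∂μ)
        = (∫⁻ y, ∫⁻ x', ∫⁻ y',
            ENNReal.ofReal ((f x x' - g y y') ^ 2 * (p x y * p x' y')) ∂μ ∂μ ∂μ).toReal := by
    intro x hx
    have hsm : AEStronglyMeasurable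
        (fun y => ∫ x', ∫ y', (f x x' - g y y') ^ 2 * (p x y * p x' y') ∂μ ∂μ) μ := by
      have hH : StronglyMeasurable fun r : (ℝ × ℝ) × ℝ =>
          (f x r.1.2 - g r.1.1 r.2) ^ 2 * (p x r.1.1 * p r.1.2 r.2) :=
        (hA.comp ((measurable_const.prodMk measurable_fst.fst).prodMk
          (measurable_fst.snd.prodMk measurable_snd))).stronglyMeasurable
      exact hH.integral_prod_right'.integral_prod_right'.aestronglyMeasurable
    rw [integral_eq_lintegral_of_nonneg_ae ?_ hsm]
    · congr 1
      refine lintegral_congr_ae ?_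
      filter_upwards [haemem] with y hy
      rw [hI2 x hx y hy, ENNReal.ofReal_toReal]
      exact (lt_of_le_of_lt (hb2 x hx y hy) ENNReal.ofReal_lt_top).ne
    · filter_upwards [haemem] with y hy
      rw [hI2 x hx y hy]
      exact ENNReal.toReal_nonneg
  -- the quadruple lintegral is zero
  have hL : (∫⁻ x, ∫⁻ y, ∫⁻ x', ∫⁻ y',
      ENNReal.ofReal ((f x x' - g y y') ^ 2 * (p x y * p x' y')) ∂μ ∂μ ∂μ ∂μ) = 0 := by
    have hsm : AEStronglyMeasurable
        (fun x => ∫ y, ∫ x', ∫ y', (f x x' - g y y') ^ 2 * (p x y * p x' y') ∂μ ∂μ ∂μ) μ := by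
      have hH : StronglyMeasurable fun r : ((ℝ × ℝ) × ℝ) × ℝ =>
          (f r.1.1.1 r.1.2 - g r.1.1.2 r.2) ^ 2 * (p r.1.1.1 r.1.1.2 * p r.1.2 r.2) :=
        (hA.comp ((measurable_fst.fst.fst.prodMk measurable_fst.fst.snd).prodMk
          (measurable_fst.snd.prodMk measurable_snd))).stronglyMeasurable
      exact hH.integral_prod_right'.integral_prod_right'.integral_prod_right'.aestronglyMeasurable
    have heq : (∫ x, ∫ y, ∫ x', ∫ y',
        (f x x' - g y y') ^ 2 * (p x y * p x' y') ∂μ ∂μ ∂μ ∂μ)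
          = (∫⁻ x, ∫⁻ y, ∫⁻ x', ∫⁻ y',
              ENNReal.ofReal ((f x x' - g y y') ^ 2 * (p x y * p x' y')) ∂μ ∂μ ∂μ ∂μ).toReal := by
      rw [integral_eq_lintegral_of_nonneg_ae ?_ hsm]
      · congr 1
        refine lintegral_congr_ae ?_
        filter_upwards [haemem] with x hx
        rw [hI1 x hx, ENNReal.ofReal_toReal]
        exact (lt_of_le_of_lt (hb1 x hx) ENNReal.one_lt_top).ne
      · filter_upwards [haemem] with x hx
        rw [hI1 x hx]
        exact ENNReal.toReal_nonneg
    rw [hGWzero] at heq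
    rcases (ENNReal.toReal_eq_zero_iff _).mp heq.symm with h | h
    · exact h
    · exact absurd h (by
        intro hcontra
        rw [hcontra] at hbL
        exact absurd hbL (by simp))
  -- swap the integration order: bring y, y' to the outside
  have hswap1 : ∀ x y : ℝ,
      (∫⁻ x', ∫⁻ y', ENNReal.ofReal ((f x x' - g y y') ^ 2 * (p x y * p x' y')) ∂μ ∂μ)
        = ∫⁻ y', ∫⁻ x', ENNReal.ofReal ((f x x' - g y y') ^ 2 * (p x y * p x' y')) ∂μ ∂μ := by
    intro x y
    exact lintegral_lintegral_swap
      ((hΦ.comp ((measurable_const.prodMk measurable_const).prodMk measurable_id)).aemeasurable)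
  simp only [hswap1] at hL
  have hswap2 :
      (∫⁻ x, ∫⁻ y, ∫⁻ y', ∫⁻ x',
          ENNReal.ofReal ((f x x' - g y y') ^ 2 * (p x y * p x' y')) ∂μ ∂μ ∂μ ∂μ)
        = ∫⁻ y, ∫⁻ x, ∫⁻ y', ∫⁻ x',
            ENNReal.ofReal ((f x x' - g y y') ^ 2 * (p x y * p x' y')) ∂μ ∂μ ∂μ ∂μ := by
    refine lintegral_lintegral_swap ?_
    have h1 : Measurable fun r : ((ℝ × ℝ) × ℝ) × ℝ =>
        ENNReal.ofReal ((f r.1.1.1 r.2 - g r.1.1.2 r.1.2) ^ 2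
          * (p r.1.1.1 r.1.1.2 * p r.2 r.1.2)) :=
      hΦ.comp ((measurable_fst.fst.fst.prodMk measurable_fst.fst.snd).prodMk
        (measurable_snd.prodMk measurable_fst.snd))
    exact (h1.lintegral_prod_right'.lintegral_prod_right').aemeasurable
  rw [hswap2] at hL
  have hswap3 : ∀ y : ℝ,
      (∫⁻ x, ∫⁻ y', ∫⁻ x',
          ENNReal.ofReal ((f x x' - g y y') ^ 2 * (p x y * p x' y')) ∂μ ∂μ ∂μ)
        = ∫⁻ y', ∫⁻ x, ∫⁻ x',
            ENNReal.ofReal ((f x x' - g y y') ^ 2 * (p x y * p x' y')) ∂μ ∂μ ∂μ := by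
    intro y
    refine lintegral_lintegral_swap ?_
    have h1 : Measurable fun r : (ℝ × ℝ) × ℝ =>
        ENNReal.ofReal ((f r.1.1 r.2 - g y r.1.2) ^ 2 * (p r.1.1 y * p r.2 r.1.2)) :=
      hΦ.comp ((measurable_fst.fst.prodMk measurable_const).prodMk
        (measurable_snd.prodMk measurable_fst.snd))
    exact h1.lintegral_prod_right'.aemeasurable
  simp only [hswap3] at hL
  -- pass to the product measure
  have hKmeas : Measurable fun z : ℝ × ℝ =>
      ∫⁻ x, ∫⁻ x', ENNReal.ofReal
        ((f x x' - g z.1 z.2) ^ 2 * (p x z.1 * p x' z.2)) ∂μ ∂μ := by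
    have hG : Measurable fun r : ((ℝ × ℝ) × ℝ) × ℝ =>
        ENNReal.ofReal ((f r.1.2 r.2 - g r.1.1.1 r.1.1.2) ^ 2
          * (p r.1.2 r.1.1.1 * p r.2 r.1.1.2)) :=
      hΦ.comp ((measurable_fst.snd.prodMk measurable_fst.fst.fst).prodMk
        (measurable_snd.prodMk measurable_fst.fst.snd))
    exact hG.lintegral_prod_right'.lintegral_prod_right'
  have hprod0 : (∫⁻ z : ℝ × ℝ, (∫⁻ x, ∫⁻ x', ENNReal.ofReal
      ((f x x' - g z.1 z.2) ^ 2 * (p x z.1 * p x' z.2)) ∂μ ∂μ) ∂(μ.prod μ)) = 0 := by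
    rw [lintegral_prod _ hKmeas.aemeasurable]
    exact hL
  have hK0 : ∀ᵐ z ∂(μ.prod μ), (∫⁻ x, ∫⁻ x', ENNReal.ofReal
      ((f x x' - g z.1 z.2) ^ 2 * (p x z.1 * p x' z.2)) ∂μ ∂μ) = 0 := by
    have h := (lintegral_eq_zero_iff hKmeas).mp hprod0
    filter_upwards [h] with z hz using hz
  have hmeq : volume.restrict (I ×ˢ I) = μ.prod μ := by
    rw [hμdef, Measure.prod_restrict, ← Measure.volume_eq_prod]
  rw [hmeq]
  have hmemprod : ∀ᵐ q ∂(μ.prod μ), q ∈ I ×ˢ I := by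
    rw [← hmeq]; exact ae_restrict_mem (hIm.prod hIm)
  filter_upwards [hK0, hmemprod] with q hq0 hqmem
  obtain ⟨hq1, hq2⟩ := hqmem
  have hmeasx : Measurable fun x => ∫⁻ x', ENNReal.ofReal
      ((f x x' - g q.1 q.2) ^ 2 * (p x q.1 * p x' q.2)) ∂μ := by
    have h1 : Measurable fun r : ℝ × ℝ => ENNReal.ofReal
        ((f r.1 r.2 - g q.1 q.2) ^ 2 * (p r.1 q.1 * p r.2 q.2)) :=
      hΦ.comp ((measurable_fst.prodMk measurable_const).prodMk
        (measurable_snd.prodMk measurable_const))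
    exact h1.lintegral_prod_right'
  have h1 := (lintegral_eq_zero_iff hmeasx).mp hq0
  have h2 : ∀ᵐ x ∂μ, (∫ x', p x q.1 * f x x' * p x' q.2 ∂μ) = p x q.1 * g q.1 q.2 := by
    filter_upwards [h1, haemem] with x hxa hxI
    have hmeasx' : Measurable fun x' => ENNReal.ofReal
        ((f x x' - g q.1 q.2) ^ 2 * (p x q.1 * p x' q.2)) :=
      hΦ.comp ((measurable_const.prodMk measurable_const).prodMk
        (measurable_id.prodMk measurable_const))
    have hxa' : (∫⁻ x', ENNReal.ofReal
        ((f x x' - g q.1 q.2) ^ 2 * (p x q.1 * p x' q.2)) ∂μ) = 0 := hxa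
    have h3 := (lintegral_eq_zero_iff hmeasx').mp hxa'
    have h4 : (∫ x', p x q.1 * f x x' * p x' q.2 ∂μ)
        = ∫ x', p x q.1 * g q.1 q.2 * p x' q.2 ∂μ := by
      refine integral_congr_ae ?_
      filter_upwards [h3, haemem] with x' h0 hx'I
      have h0' : ENNReal.ofReal
          ((f x x' - g q.1 q.2) ^ 2 * (p x q.1 * p x' q.2)) = 0 := h0
      have hnn : 0 ≤ (f x x' - g q.1 q.2) ^ 2 * (p x q.1 * p x' q.2) :=
        mul_nonneg (sq_nonneg _) (mul_nonneg (hppos x hxI q.1 hq1) (hppos x' hx'I q.2 hq2))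
      have hz : (f x x' - g q.1 q.2) ^ 2 * (p x q.1 * p x' q.2) = 0 :=
        le_antisymm (ENNReal.ofReal_eq_zero.mp h0') hnn
      rcases mul_eq_zero.mp hz with h | h
      · have h5 : f x x' - g q.1 q.2 = 0 := by
          exact pow_eq_zero_iff (two_ne_zero) |>.mp h
        have hfg : f x x' = g q.1 q.2 := by linarith [sub_eq_zero.mp h5]
        rw [hfg]
      · rcases mul_eq_zero.mp h with h | h <;> simp [h]
    rw [h4]
    have h6 : (∫ x', p x q.1 * g q.1 q.2 * p x' q.2 ∂μ)
        = (p x q.1 * g q.1 q.2) * ∫ x', p x' q.2 ∂μ := integral_const_mul _ _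
    rw [h6, hmarg2 q.2 hq2, mul_one]
  calc (∫ x, ∫ x', p x q.1 * f x x' * p x' q.2 ∂μ ∂μ)
      = ∫ x, p x q.1 * g q.1 q.2 ∂μ := integral_congr_ae h2
    _ = (∫ x, p x q.1 ∂μ) * g q.1 q.2 := integral_mul_const _ _
    _ = g q.1 q.2 := by rw [hmarg2 q.1 hq1, one_mul]
end
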